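/- arXiv:2509.00070 — 2 statements merged into one kernel-verified Lean document; each statement's English description precedes it below -/
import Mathlib

section
/- For every integer n ≥ 2, F_n = (1/(n-1)) · Σ_{k=1}^{n-1} L_k · F_{n-k}, i.e., the sum Σ_{k=1}^{n-1} L_k · F_{n-k} is divisible by n-1 with quotient F_n (stated over the rationals or as divisibility plus quotient over integers). -/
/-!
Writing `L k = F (k-1) + F (k+1)`, the convolution `S n = ∑_{k=1}^{n} L k * F (n+1-k)` obeys
`S (n+2) = S (n+1) + S n + L (n+2)`: the Fibonacci recursion applied to every factor `F`, plus
the one new term. Since `(n+2) F (n+3) - (n+1) F (n+2) - n F (n+1) = F (n+1) + F (n+3) = L (n+2)`,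
the sequence `n F (n+1)` obeys the same recursion, hence `S n = n F (n+1)`.
-/


def L : ℕ → ℕ
  | 0 => 2
  | 1 => 1
  | (n+2) => L (n+1) + L n

open Finset Nat

lemma L_succ_eq_fib_add_fib (n : ℕ) : L (n + 1) = fib n + fib (n + 2) := by
  induction n using Nat.twoStepInduction with
  | zero => rfl
  | one => rfl
  | more n ih₁ ih₂ =>
    change L (n + 2) + L (n + 1) = _
    rw [ih₁, ih₂, fib_add_two (n := n + 2), fib_add_two (n := n)]
    ring

lemma sum_Icc_L_mul_fib (n : ℕ) : ∑ k ∈ Icc 1 n, L k * fib (n + 1 - k) = n * fib (n + 1) := by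
  induction n using Nat.twoStepInduction with
  | zero => rfl
  | one => rfl
  | more n ih₁ ih₂ =>
    have hsplit : ∑ k ∈ Icc 1 (n + 1), L k * fib (n + 3 - k)
        = ∑ k ∈ Icc 1 (n + 1), L k * fib (n + 2 - k)
          + ∑ k ∈ Icc 1 (n + 1), L k * fib (n + 1 - k) := by
      rw [← sum_add_distrib]
      refine sum_congr rfl fun k hk ↦ ?_
      have hk : k ≤ n + 1 := (mem_Icc.mp hk).2
      rw [show n + 3 - k = n + 1 - k + 2 by omega, show n + 2 - k = n + 1 - k + 1 by omega,
        fib_add_two]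
      ring
    have hfib_zero : ∑ k ∈ Icc 1 (n + 1), L k * fib (n + 1 - k)
        = ∑ k ∈ Icc 1 n, L k * fib (n + 1 - k) := by
      simp [sum_Icc_succ_top]
    rw [sum_Icc_succ_top (by omega), show n + 2 + 1 = n + 3 from rfl, hsplit, hfib_zero, ih₁, ih₂,
      show n + 3 - (n + 2) = 1 by omega, fib_one, L_succ_eq_fib_add_fib]
    have h₃ : fib (n + 3) = fib (n + 1) + fib (n + 2) := fib_add_two
    have h₂ : fib (n + 2) = fib n + fib (n + 1) := fib_add_two
    change (n + 1) * fib (n + 2) + n * fib (n + 1) + (fib (n + 1) + fib (n + 3)) * 1 = _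
    rw [h₃, h₂]
    ring

theorem stmt1 (n : ℕ) (hn : 2 ≤ n) :
    (Nat.fib n : ℚ) = (1 / ((n : ℚ) - 1)) * ∑ k ∈ Finset.Icc 1 (n - 1), (L k : ℚ) * Nat.fib (n - k) := by
  obtain ⟨m, rfl⟩ : ∃ m, n = m + 1 := ⟨n - 1, by omega⟩
  have hm : (m : ℚ) ≠ 0 := by norm_cast; omega
  have hsum := congrArg (Nat.cast : ℕ → ℚ) (sum_Icc_L_mul_fib m)
  push_cast at hsum
  rw [Nat.add_sub_cancel, hsum]
  push_cast
  rw [add_sub_cancel_right]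
  field_simp
end

section
/- Using the extended convolution including the k = n term: for every n ≥ 1, Σ_{k=1}^{n} L_k · F_{n-k} = (n-1)·F_n + L_n · F_0 = (n-1)·F_n, where F_0 = 0 (valid for n ≥ 2, and equal to 0 for n = 1). -/
/-!
Write `S n = ∑_{k=1}^{n} L_k F_{n-k}`. Splitting `F_{n+2-k} = F_{n+1-k} + F_{n-k}` in all but the
two top terms gives `S (n+2) = S (n+1) + S n + L_{n+1}`, and `(n-1) F_n` satisfies the same
recurrence because `L_{n+1} = F_n + F_{n+2}`.
-/

open Finset

theorem L_add_one_eq_fib_add_fib : ∀ n, L (n + 1) = Nat.fib n + Nat.fib (n + 2)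
  | 0 => rfl
  | 1 => rfl
  | n + 2 => by
    change L (n + 2) + L (n + 1) = _
    rw [L_add_one_eq_fib_add_fib n, L_add_one_eq_fib_add_fib (n + 1)]
    simp only [Nat.fib_add_two]
    ring

def lucasFibConv (n : ℕ) : ℕ := ∑ k ∈ Icc 1 n, L k * Nat.fib (n - k)

theorem lucasFibConv_add_two (n : ℕ) :
    lucasFibConv (n + 2) = lucasFibConv (n + 1) + lucasFibConv n + L (n + 1) := by
  have hsplit : ∑ k ∈ Icc 1 n, L k * Nat.fib (n + 2 - k)
      = ∑ k ∈ Icc 1 n, L k * Nat.fib (n + 1 - k) + lucasFibConv n := by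
    rw [lucasFibConv, ← sum_add_distrib]
    refine sum_congr rfl fun k hk => ?_
    have hkn : k ≤ n := (mem_Icc.mp hk).2
    rw [show n + 2 - k = n - k + 2 by omega, show n + 1 - k = n - k + 1 by omega,
      Nat.fib_add_two]
    ring
  simp only [lucasFibConv, sum_Icc_succ_top (show 1 ≤ n + 1 by omega),
    sum_Icc_succ_top (show 1 ≤ n + 2 by omega)]
  rw [hsplit, show n + 2 - (n + 1) = 1 by omega]
  simp [lucasFibConv]

theorem lucasFibConv_eq : ∀ n, lucasFibConv n = (n - 1) * Nat.fib n
  | 0 => rfl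
  | 1 => rfl
  | n + 2 => by
    rw [lucasFibConv_add_two, lucasFibConv_eq (n + 1), lucasFibConv_eq n,
      L_add_one_eq_fib_add_fib]
    cases n with
    | zero => rfl
    | succ m =>
      simp only [Nat.add_sub_cancel, show m + 1 + 2 - 1 = m + 2 by omega,
        Nat.fib_add_two]
      ring

theorem stmt11_general (n : ℕ) :
    ∑ k ∈ Finset.Icc 1 n, L k * Nat.fib (n - k) = (n - 1) * Nat.fib n :=
  lucasFibConv_eq n

theorem stmt11 (n : ℕ) (hn : 1 ≤ n) :
    ∑ k ∈ Finset.Icc 1 n, L k * Nat.fib (n - k) = (n - 1) * Nat.fib n :=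
  stmt11_general n
end
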